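/- arXiv:2304.02477 — 2 statements merged into one kernel-verified Lean document; each statement's English description precedes it below -/
import Mathlib

section
/- Let N ≥ 2, let ρ^1,…,ρ^{N−1} > 0 and ρ̃ > 0 be real numbers, and let ε > 0 satisfy (N−1)·ρ̃·ε² ≤ min_{1 ≤ i ≤ N−1} ρ^i. Then for every φ ∈ Σ^N one has Σ_{i=1}^{N−1} ρ^i (φ^i)² + ρ̃ ε² (1 − (φ^N − 1)²) ≥ ρ̃ ε² > 0. In other words, the density function obtained from the quadratic interpolation choice β_M(s) = s², β_V(s) = 1 − (s − 1)² is uniformly positive on the hyperplane Σ^N. -/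
/-- Let `N = n+1 ≥ 2`, with material densities `ρ^1,…,ρ^n > 0`, void density
`ρ̃ > 0` and `ε > 0` satisfying `n·ρ̃·ε² ≤ ρ^i` for every material index `i`. Then for
every `φ` in the hyperplane `Σ^N` the quadratically interpolated density satisfies
`∑_{i=1}^{n} ρ^i (φ^i)² + ρ̃ ε² (1 - (φ^N - 1)²) ≥ ρ̃ ε² > 0`. -/
theorem interpolated_density_uniformly_positive
    (n : ℕ) (hn : 1 ≤ n) (ρ : Fin n → ℝ) (hρ : ∀ i, 0 < ρ i)
    (ρt ε : ℝ) (hρt : 0 < ρt) (hε : 0 < ε)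
    (hscale : ∀ i, (n : ℝ) * ρt * ε ^ 2 ≤ ρ i)
    (φ : Fin (n + 1) → ℝ) (hφ : ∑ i, φ i = 1) :
    ρt * ε ^ 2 ≤ ∑ i : Fin n, ρ i * (φ i.castSucc) ^ 2
        + ρt * ε ^ 2 * (1 - (φ (Fin.last n) - 1) ^ 2) ∧
    0 < ρt * ε ^ 2 := by
  have hc : 0 < ρt * ε ^ 2 := by positivity
  refine ⟨?_, hc⟩
  have hsum : ∑ i : Fin n, φ i.castSucc + φ (Fin.last n) = 1 := by
    rw [← Fin.sum_univ_castSucc]; exact hφ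
  have h1 : φ (Fin.last n) - 1 = -(∑ i : Fin n, φ i.castSucc) := by linarith
  have h2 : (∑ i : Fin n, φ i.castSucc) ^ 2
      ≤ (n : ℝ) * ∑ i : Fin n, (φ i.castSucc) ^ 2 := by
    have := sq_sum_le_card_mul_sum_sq (s := Finset.univ)
      (f := fun i : Fin n => φ i.castSucc)
    simpa using this
  have h3 : (n : ℝ) * ρt * ε ^ 2 * ∑ i : Fin n, (φ i.castSucc) ^ 2
      ≤ ∑ i : Fin n, ρ i * (φ i.castSucc) ^ 2 := by
    rw [Finset.mul_sum]
    exact Finset.sum_le_sum fun i _ =>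
      mul_le_mul_of_nonneg_right (hscale i) (sq_nonneg _)
  rw [h1]
  nlinarith [h2, h3, sq_nonneg (∑ i : Fin n, φ i.castSucc)]
end

section
/- Equipartition of energy for the leading-order interface profile: let γ > 0, let ψ₀ : ℝ^N → ℝ be continuously differentiable, let Φ : ℝ → ℝ^N be twice continuously differentiable, and let F : ℝ → ℝ^N be a function such that for every z ∈ ℝ one has γ Φ''(z) = γ ∇ψ₀(Φ(z)) − F(z) and F(z)·Φ'(z) = 0. Assume moreover that Φ'(z) → 0 and ψ₀(Φ(z)) → 0 as z → −∞. Then |Φ'(z)|² = 2 ψ₀(Φ(z)) for every z ∈ ℝ. -/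
/-!
The energy `‖Φ'‖² - 2 ψ₀ ∘ Φ` is a first integral of the profile equation: its derivative is
`2 ⟪Φ', Φ'' - ∇ψ₀(Φ)⟫ = -(2/γ) ⟪Φ', F⟫ = 0`. Being constant with limit `0` at `-∞`, it vanishes.
-/

open Filter

open scoped RealInnerProductSpace Topology

section

variable {E : Type*} [NormedAddCommGroup E] [InnerProductSpace ℝ E]

theorem HasGradientAt.hasDerivAt_comp [CompleteSpace E] {ψ : E → ℝ} {g : E} {Φ : ℝ → E} {v : E}
    {z : ℝ} (hψ : HasGradientAt ψ g (Φ z)) (hΦ : HasDerivAt Φ v z) :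
    HasDerivAt (fun t => ψ (Φ t)) ⟪g, v⟫ z :=
  hψ.hasFDerivAt.comp_hasDerivAt z hΦ

theorem hasDerivAt_norm_sq_sub_two_mul_comp [CompleteSpace E] {ψ : E → ℝ} {g : E}
    {Φ Φ' : ℝ → E} {a : E} {z : ℝ} (hψ : HasGradientAt ψ g (Φ z)) (hΦ : HasDerivAt Φ (Φ' z) z)
    (hΦ' : HasDerivAt Φ' a z) :
    HasDerivAt (fun t => ‖Φ' t‖ ^ 2 - 2 * ψ (Φ t)) (2 * ⟪Φ' z, a - g⟫) z := by
  refine (hΦ'.norm_sq.sub ((hψ.hasDerivAt_comp hΦ).const_mul 2)).congr_deriv ?_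
  rw [inner_sub_right, real_inner_comm g]
  ring

theorem inner_sub_eq_zero_of_smul_eq_smul_sub {γ : ℝ} (hγ : γ ≠ 0) {a g f v : E}
    (hode : γ • a = γ • g - f) (horth : ⟪f, v⟫ = 0) : ⟪v, a - g⟫ = 0 := by
  have hsub : γ • (a - g) = -f := by rw [smul_sub, hode]; abel
  have : γ * ⟪v, a - g⟫ = 0 := by
    rw [← inner_smul_right, hsub, inner_neg_right, real_inner_comm, horth, neg_zero]
  exact (mul_eq_zero.mp this).resolve_left hγ

end

theorem eq_of_hasDerivAt_zero_of_tendsto_atBot {G : Type*} [NormedAddCommGroup G]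
    [NormedSpace ℝ G] {f : ℝ → G} {c : G} (hf : ∀ z, HasDerivAt f 0 z)
    (hlim : Tendsto f atBot (𝓝 c)) (z : ℝ) : f z = c := by
  have hconst : f = fun _ => f z := funext fun t =>
    is_const_of_deriv_eq_zero (fun x => (hf x).differentiableAt) (fun x => (hf x).deriv) t z
  rw [hconst] at hlim
  exact tendsto_nhds_unique tendsto_const_nhds hlim

/-- Equipartition of energy for the leading-order interface profile:
if `γ > 0`, `ψ₀ ∈ C¹(ℝ^N)`, `Φ ∈ C²(ℝ;ℝ^N)` and `F : ℝ → ℝ^N` satisfy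
`γ Φ''(z) = γ ∇ψ₀(Φ(z)) - F(z)` and `F(z)·Φ'(z) = 0` for all `z`, and if
`Φ'(z) → 0` and `ψ₀(Φ(z)) → 0` as `z → -∞`, then `|Φ'(z)|² = 2 ψ₀(Φ(z))` for all `z`. -/
theorem equipartition_of_energy (N : ℕ) (γ : ℝ) (hγ : 0 < γ)
    (ψ₀ : EuclideanSpace ℝ (Fin N) → ℝ) (hψ₀ : ContDiff ℝ 1 ψ₀)
    (Φ : ℝ → EuclideanSpace ℝ (Fin N)) (hΦ : ContDiff ℝ 2 Φ)
    (F : ℝ → EuclideanSpace ℝ (Fin N))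
    (hode : ∀ z : ℝ, γ • deriv (deriv Φ) z = γ • gradient ψ₀ (Φ z) - F z)
    (horth : ∀ z : ℝ, (inner ℝ (F z) (deriv Φ z) : ℝ) = 0)
    (hlim1 : Tendsto (fun z => deriv Φ z) atBot (nhds 0))
    (hlim2 : Tendsto (fun z => ψ₀ (Φ z)) atBot (nhds 0)) :
    ∀ z : ℝ, ‖deriv Φ z‖ ^ 2 = 2 * ψ₀ (Φ z) := by
  have hconserved : ∀ z, HasDerivAt (fun t => ‖deriv Φ t‖ ^ 2 - 2 * ψ₀ (Φ t)) 0 z := fun z => by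
    have hderiv := hasDerivAt_norm_sq_sub_two_mul_comp
      ((hψ₀.differentiable one_ne_zero (Φ z)).hasGradientAt)
      ((hΦ.differentiable two_ne_zero z).hasDerivAt)
      ((hΦ.differentiable_deriv_two z).hasDerivAt)
    rwa [inner_sub_eq_zero_of_smul_eq_smul_sub hγ.ne' (hode z) (horth z), mul_zero] at hderiv
  have hlim : Tendsto (fun t => ‖deriv Φ t‖ ^ 2 - 2 * ψ₀ (Φ t)) atBot (𝓝 0) := by
    simpa using (hlim1.norm.pow 2).sub (hlim2.const_mul 2)
  intro z
  exact sub_eq_zero.mp (eq_of_hasDerivAt_zero_of_tendsto_atBot hconserved hlim z)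
end
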